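/- arXiv:1404.5975 — 4 statements merged into one kernel-verified Lean document; each statement's English description precedes it below -/
import Mathlib

section
/- For every n ≥ 2 and every cardinal bound κ ≥ 2, f_κ(n) ≥ 2^(2^(n-2)), where f_κ(n) is the smallest b such that every system S ⊆ E_n that is solvable in ℕ and has fewer than κ solutions in ℕⁿ admits a solution with all coordinates ≤ b. -/
/-- An equation of one of the forms x_k = 1, x_i + x_j = x_k, x_i · x_j = x_k,
coded by the indices of its variables. -/
abbrev DEqn : Type := ℕ ⊕ (ℕ × ℕ × ℕ) ⊕ (ℕ × ℕ × ℕ)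

/-- The equation coded by `e` holds under the valuation `v`. -/
def DEqn.holds (v : ℕ → ℕ) : DEqn → Prop
  | Sum.inl k => v k = 1
  | Sum.inr (Sum.inl (i, j, k)) => v i + v j = v k
  | Sum.inr (Sum.inr (i, j, k)) => v i * v j = v k

/-- The equation `e` belongs to E_n, i.e., all its variable indices are among x_1,...,x_n
(0-indexed: < n). -/
def DEqn.inE (n : ℕ) : DEqn → Prop
  | Sum.inl k => k < n
  | Sum.inr (Sum.inl (i, j, k)) => i < n ∧ j < n ∧ k < n
  | Sum.inr (Sum.inr (i, j, k)) => i < n ∧ j < n ∧ k < n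

/-- Extend a tuple x ∈ ℕⁿ to a valuation ℕ → ℕ (zero outside). -/
def extVal (n : ℕ) (x : Fin n → ℕ) : ℕ → ℕ := fun i => if h : i < n then x ⟨i, h⟩ else 0

/-- The set of solutions in ℕⁿ of the system S. -/
def SolSet (n : ℕ) (S : Set DEqn) : Set (Fin n → ℕ) :=
  {x | ∀ e ∈ S, DEqn.holds (extVal n x) e}

/-- `b` is an admissible bound for n and κ: every system S ⊆ E_n which is solvable in ℕⁿ
and has fewer than κ solutions in ℕⁿ has a solution with all coordinates ≤ b.
(f_κ(n) is the least such b.) -/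
def IsBound (κ : Cardinal) (n b : ℕ) : Prop :=
  ∀ S : Set DEqn, (∀ e ∈ S, DEqn.inE n e) → (SolSet n S).Nonempty →
    Cardinal.mk (SolSet n S) < κ → ∃ x ∈ SolSet n S, ∀ i, x i ≤ b

/-- The unique-solution values: val 0 = 1, val k = 2^(2^(k-1)) for k ≥ 1. -/
def dVal : ℕ → ℕ
  | 0 => 1
  | k + 1 => 2 ^ 2 ^ k

lemma dVal_sq (k : ℕ) : dVal (k + 1) * dVal (k + 1) = dVal (k + 2) := by
  show (2 ^ 2 ^ k) * (2 ^ 2 ^ k) = 2 ^ 2 ^ (k + 1)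
  rw [← pow_add]
  congr 1
  rw [pow_succ]
  omega

/-- The system with the unique doubly-exponential solution. -/
def dSys (n : ℕ) : Set DEqn :=
  {Sum.inl 0, Sum.inr (Sum.inl (0, 0, 1))} ∪
    {e | ∃ k, 1 ≤ k ∧ k ≤ n - 2 ∧ e = Sum.inr (Sum.inr (k, k, k + 1))}

/-- For every n ≥ 2 and every cardinal κ ≥ 2, f_κ(n) ≥ 2^(2^(n-2)):
every admissible bound b satisfies b ≥ 2^(2^(n-2)). -/
theorem stmt_2 (n : ℕ) (hn : 2 ≤ n) (κ : Cardinal) (hκ : 2 ≤ κ) (b : ℕ)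
    (hb : IsBound κ n b) : 2 ^ 2 ^ (n - 2) ≤ b := by
  set S := dSys n with hS
  -- the intended solution
  set xsol : Fin n → ℕ := fun i => dVal i.1 with hx
  have hext : ∀ m (h : m < n) (y : Fin n → ℕ), extVal n y m = y ⟨m, h⟩ := by
    intro m h y
    simp [extVal, h]
  have hmem : xsol ∈ SolSet n S := by
    intro e he
    rcases he with (rfl | rfl) | ⟨k, hk1, hk2, rfl⟩
    · show extVal n xsol 0 = 1
      rw [hext 0 (by omega)]
      rfl
    · show extVal n xsol 0 + extVal n xsol 0 = extVal n xsol 1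
      rw [hext 0 (by omega), hext 1 (by omega)]
      rfl
    · show extVal n xsol k * extVal n xsol k = extVal n xsol (k + 1)
      rw [hext k (by omega), hext (k + 1) (by omega)]
      obtain ⟨k, rfl⟩ : ∃ m, k = m + 1 := ⟨k - 1, by omega⟩
      exact dVal_sq k
  -- uniqueness
  have huniq : ∀ y ∈ SolSet n S, y = xsol := by
    intro y hy
    funext i
    obtain ⟨m, hm⟩ := i
    induction m using Nat.strong_induction_on with
    | _ m ih =>
      match m with
      | 0 =>
        have h0 : (Sum.inl 0 : DEqn) ∈ S := Or.inl (Or.inl rfl)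
        have := hy _ h0
        simp only [DEqn.holds] at this
        rw [hext 0 (by omega)] at this
        exact this
      | 1 =>
        have h0 : (Sum.inl 0 : DEqn) ∈ S := Or.inl (Or.inl rfl)
        have hy0 := hy _ h0
        simp only [DEqn.holds] at hy0
        rw [hext 0 (by omega)] at hy0
        have h1 : (Sum.inr (Sum.inl (0,0,1)) : DEqn) ∈ S := Or.inl (Or.inr rfl)
        have hy1 := hy _ h1
        simp only [DEqn.holds] at hy1
        rw [hext 0 (by omega), hext 1 hm] at hy1
        rw [← hy1, hy0]
        rfl
      | (k + 2) =>
        have hk : (Sum.inr (Sum.inr (k+1, k+1, k+2)) : DEqn) ∈ S :=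
          Or.inr ⟨k + 1, by omega, by omega, rfl⟩
        have hyk := hy _ hk
        simp only [DEqn.holds] at hyk
        rw [hext (k+1) (by omega), hext (k+2) hm] at hyk
        have := ih (k + 1) (by omega) (by omega)
        rw [this] at hyk
        rw [← hyk]
        exact dVal_sq k
  have hsingle : SolSet n S = {xsol} := by
    apply Set.eq_singleton_iff_unique_mem.mpr
    exact ⟨hmem, huniq⟩
  have hinE : ∀ e ∈ S, DEqn.inE n e := by
    intro e he
    rcases he with (rfl | rfl) | ⟨k, hk1, hk2, rfl⟩
    · exact (by omega : (0:ℕ) < n)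
    · exact ⟨by omega, by omega, by omega⟩
    · exact ⟨by omega, by omega, by omega⟩
  have hcard : Cardinal.mk (SolSet n S) < κ := by
    rw [hsingle]
    calc (Cardinal.mk ({xsol} : Set (Fin n → ℕ))) = 1 := Cardinal.mk_singleton _
    _ < 2 := by norm_num
    _ ≤ κ := hκ
  obtain ⟨x, hxmem, hxb⟩ := hb S hinE ⟨xsol, hmem⟩ hcard
  have := hxb ⟨n - 1, by omega⟩
  rw [huniq x hxmem] at this
  have hval : xsol ⟨n - 1, by omega⟩ = 2 ^ 2 ^ (n - 2) := by
    show dVal (n - 1) = _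
    obtain ⟨m, rfl⟩ : ∃ m, n = m + 2 := ⟨n - 2, by omega⟩
    rfl
  rwa [hval] at this
end

section
/- Suppose every system S ⊆ E_n solvable in ℕ with a unique solution has its solution bounded coordinatewise by a computable function of n. Then there is no function γ : ℕ → ℕ of exponential growth (i.e., ∃ c > 1 with γ(n) ≥ cⁿ for all large n) admitting a single-fold Diophantine representation, unless all recursively enumerable subsets of ℕ are computable. -/
/-- γ has exponential growth: for some real c > 1, γ(n) ≥ cⁿ for all large n. -/
def ExpGrowth (γ : ℕ → ℕ) : Prop :=
  ∃ c : ℝ, 1 < c ∧ ∃ m : ℕ, ∀ n, m ≤ n → c ^ n ≤ (γ n : ℝ)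

/-- γ : ℕ → ℕ has a single-fold Diophantine representation: a polynomial W with
γ(a) = b ↔ ∃! x ∈ ℕᵐ, W(a,b,x) = 0 (at most one witness tuple for each (a,b)). -/
def SingleFoldRepFun (γ : ℕ → ℕ) : Prop :=
  ∃ m : ℕ, ∃ W : MvPolynomial (Fin (m + 2)) ℤ,
    (∀ a b : ℕ, γ a = b ↔ ∃! x : Fin m → ℕ,
      MvPolynomial.eval (Fin.cons (a : ℤ) (Fin.cons (b : ℤ) (fun i => (x i : ℤ)))) W = 0) ∧
    ∀ a b : ℕ, {x : Fin m → ℕ |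
      MvPolynomial.eval (Fin.cons (a : ℤ) (Fin.cons (b : ℤ) (fun i => (x i : ℤ)))) W = 0
        }.Subsingleton

/-- A predicate p on ℕ has a single-fold Diophantine representation. -/
def SingleFoldRepPred (p : ℕ → Prop) : Prop :=
  ∃ m : ℕ, ∃ W : MvPolynomial (Fin (m + 1)) ℤ,
    ∀ a : ℕ, p a ↔ ∃! x : Fin m → ℕ,
      MvPolynomial.eval (Fin.cons (a : ℤ) (fun i => (x i : ℤ))) W = 0

/-!
Write the single-fold equation as `P(a, x) = Q(a, x)` with `P, Q` natural-number polynomials and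
compile it into a system `S_a ⊆ E_{N(a)}` in which every auxiliary variable is forced by one
equation in earlier variables: straight-line registers evaluate `P` and `Q`, and a chain of
additions computes the constant `a`, to which the parameter is tied. So `N` is computable and the
solutions of `S_a` correspond bijectively to the witnesses `x`. If `p a` holds, its witness is
unique, hence so is the solution of `S_a`, and the bound hypothesis gives `x ≤ B(N a)`. Thus
`¬p a` holds iff there is no witness below `B(N a) + 1` or there are two distinct witnesses, which
is r.e.; as `p` is r.e. too, Post's theorem makes `p` computable.
-/

namespace DEqn

def one (k : ℕ) : DEqn := Sum.inl k
def add (i j k : ℕ) : DEqn := Sum.inr (Sum.inl (i, j, k))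
def mul (i j k : ℕ) : DEqn := Sum.inr (Sum.inr (i, j, k))

@[simp] lemma holds_add {v : ℕ → ℕ} {i j k : ℕ} : (add i j k).holds v ↔ v i + v j = v k :=
  Iff.rfl
@[simp] lemma inE_add {n i j k : ℕ} : (add i j k).inE n ↔ i < n ∧ j < n ∧ k < n := Iff.rfl

lemma inE.mono {n n' : ℕ} {q : DEqn} (hq : q.inE n) (h : n ≤ n') : q.inE n' := by
  rcases q with k | ⟨i, j, k⟩ | ⟨i, j, k⟩ <;> simp only [inE] at hq ⊢ <;> omega

lemma holds_congr {n : ℕ} {q : DEqn} (hq : q.inE n) {v w : ℕ → ℕ}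
    (h : ∀ i < n, v i = w i) : q.holds v ↔ q.holds w := by
  rcases q with k | ⟨i, j, k⟩ | ⟨i, j, k⟩ <;> simp only [inE, holds] at hq ⊢
  · rw [h k hq]
  all_goals rw [h i hq.1, h j hq.2.1, h k hq.2.2]

structure Defines (q : DEqn) (t : ℕ) (g : (ℕ → ℕ) → ℕ) : Prop where
  inE : q.inE (t + 1)
  congr : ∀ v w : ℕ → ℕ, (∀ i < t, v i = w i) → g v = g w
  holds_iff : ∀ v, q.holds v ↔ v t = g v

lemma defines_zero (t : ℕ) : (add t t t).Defines t fun _ => 0 :=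
  ⟨by simp, fun _ _ _ => rfl, fun v => by simp⟩

lemma defines_one (t : ℕ) : (one t).Defines t fun _ => 1 :=
  ⟨Nat.lt_succ_self t, fun _ _ _ => rfl, fun _ => Iff.rfl⟩

lemma defines_add {i j t : ℕ} (hi : i < t) (hj : j < t) :
    (add i j t).Defines t fun v => v i + v j :=
  ⟨by simp only [inE_add]; omega, fun _ _ h => by rw [h i hi, h j hj], fun _ => eq_comm⟩

lemma defines_mul {i j t : ℕ} (hi : i < t) (hj : j < t) :
    (mul i j t).Defines t fun v => v i * v j :=
  ⟨by simp only [inE, mul]; omega, fun _ _ h => by rw [h i hi, h j hj], fun _ => eq_comm⟩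

end DEqn

open DEqn

structure Determines (L : List DEqn) (s t : ℕ) : Prop where
  le : s ≤ t
  inE : ∀ q ∈ L, q.inE t
  exists_solution : ∀ v : ℕ → ℕ, ∃ w, (∀ i < s, w i = v i) ∧ ∀ q ∈ L, q.holds w
  eq_of_eq : ∀ v w : ℕ → ℕ, (∀ q ∈ L, q.holds v) → (∀ q ∈ L, q.holds w) →
    (∀ i < s, v i = w i) → ∀ i < t, v i = w i

namespace Determines

variable {L L₁ L₂ : List DEqn} {s t u : ℕ}

lemma nil (s : ℕ) : Determines [] s s :=
  ⟨le_rfl, by simp, fun v => ⟨v, fun _ _ => rfl, by simp⟩, fun _ _ _ _ h => h⟩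

lemma append (h₁ : Determines L₁ s t) (h₂ : Determines L₂ t u) :
    Determines (L₁ ++ L₂) s u where
  le := h₁.le.trans h₂.le
  inE q hq := (List.mem_append.1 hq).elim (fun hq => (h₁.inE q hq).mono h₂.le) (h₂.inE q)
  exists_solution v := by
    obtain ⟨w₁, hw₁v, hw₁⟩ := h₁.exists_solution v
    obtain ⟨w₂, hw₂w₁, hw₂⟩ := h₂.exists_solution w₁
    refine ⟨w₂, fun i hi => (hw₂w₁ i (hi.trans_le h₁.le)).trans (hw₁v i hi), ?_⟩
    simp only [List.mem_append]
    rintro q (hq | hq)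
    · exact (holds_congr (h₁.inE q hq) hw₂w₁).2 (hw₁ q hq)
    · exact hw₂ q hq
  eq_of_eq v w hv hw h := by
    simp only [List.mem_append, or_imp, forall_and] at hv hw
    exact h₂.eq_of_eq v w hv.2 hw.2 (h₁.eq_of_eq v w hv.1 hw.1 h)

lemma snoc (h : Determines L s t) {q : DEqn} {g : (ℕ → ℕ) → ℕ} (hq : q.Defines t g) :
    Determines (L ++ [q]) s (t + 1) where
  le := h.le.trans t.le_succ
  inE q' hq' := by
    rcases List.mem_append.1 hq' with hq' | hq'
    · exact (h.inE q' hq').mono t.le_succ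
    · rw [List.mem_singleton.1 hq']; exact hq.inE
  exists_solution v := by
    obtain ⟨w, hwv, hw⟩ := h.exists_solution v
    have hagree : ∀ i < t, Function.update w t (g w) i = w i := fun i hi =>
      Function.update_of_ne hi.ne _ _
    refine ⟨Function.update w t (g w),
      fun i hi => (hagree i (hi.trans_le h.le)).trans (hwv i hi), ?_⟩
    simp only [List.mem_append, List.mem_singleton]
    rintro q' (hq' | rfl)
    · exact (holds_congr (h.inE q' hq') hagree).2 (hw q' hq')
    · rw [hq.holds_iff, Function.update_self, hq.congr _ _ hagree]
  eq_of_eq v w hv hw hs := by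
    simp only [List.mem_append, List.mem_singleton, or_imp, forall_and, forall_eq] at hv hw
    have hlt := h.eq_of_eq v w hv.1 hw.1 hs
    intro i hi
    rcases Nat.lt_succ_iff_lt_or_eq.1 hi with hi | rfl
    · exact hlt i hi
    · rw [(hq.holds_iff v).1 hv.2, (hq.holds_iff w).1 hw.2, hq.congr v w hlt]

end Determines

structure Computes (L : List DEqn) (s t k : ℕ) (f : (ℕ → ℕ) → ℕ) : Prop
    extends Determines L s t where
  lt : k < t
  sound : ∀ v, (∀ q ∈ L, q.holds v) → v k = f v

namespace Computes

variable {L₁ L₂ : List DEqn} {s t₁ t₂ k₁ k₂ : ℕ} {f₁ f₂ : (ℕ → ℕ) → ℕ}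

lemma var {i : ℕ} (hi : i < s) : Computes [] s s i fun v => v i :=
  ⟨Determines.nil s, hi, fun _ _ => rfl⟩

lemma single {q : DEqn} {g : (ℕ → ℕ) → ℕ} (hq : q.Defines s g) : Computes [q] s (s + 1) s g :=
  ⟨(Determines.nil s).snoc hq, s.lt_succ_self,
    fun v hv => (hq.holds_iff v).1 (hv q (List.mem_singleton_self q))⟩

lemma comp₂ (h₁ : Computes L₁ s t₁ k₁ f₁) (h₂ : Computes L₂ t₁ t₂ k₂ f₂) {op : ℕ → ℕ → ℕ}
    {q : DEqn} (hq : q.Defines t₂ fun v => op (v k₁) (v k₂)) :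
    Computes (L₁ ++ L₂ ++ [q]) s (t₂ + 1) t₂ fun v => op (f₁ v) (f₂ v) := by
  refine ⟨(h₁.append h₂.toDetermines).snoc hq, t₂.lt_succ_self, fun v hv => ?_⟩
  simp only [List.mem_append, List.mem_singleton, or_imp, forall_and, forall_eq] at hv
  rw [(hq.holds_iff v).1 hv.2, h₁.sound v hv.1.1, h₂.sound v hv.1.2]

lemma const (n s : ℕ) : ∃ L k, Computes L s (s + 2 * n + 1) k fun _ => n := by
  induction n with
  | zero => exact ⟨_, _, single (defines_zero s)⟩
  | succ n ih =>
    obtain ⟨L, k, h⟩ := ih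
    exact ⟨_, _, h.comp₂ (single (defines_one _))
      (defines_add (by have := h.lt; omega) (Nat.lt_succ_self _))⟩

end Computes

def Compilable (A : ℕ) (f : (ℕ → ℕ) → ℕ) : Prop :=
  ∀ s, A ≤ s → ∃ L t k, Computes L s t k f

namespace Compilable

variable {A : ℕ} {f g : (ℕ → ℕ) → ℕ}

lemma var {i : ℕ} (hi : i < A) : Compilable A fun v => v i :=
  fun _ hs => ⟨_, _, _, Computes.var (hi.trans_le hs)⟩

lemma const (n : ℕ) : Compilable A fun _ => n :=
  fun s _ => let ⟨L, k, h⟩ := Computes.const n s; ⟨L, _, k, h⟩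

lemma comp₂ {op : ℕ → ℕ → ℕ} {e : ℕ → ℕ → ℕ → DEqn}
    (he : ∀ {i j t}, i < t → j < t → (e i j t).Defines t fun v => op (v i) (v j))
    (hf : Compilable A f) (hg : Compilable A g) : Compilable A fun v => op (f v) (g v) := by
  intro s hs
  obtain ⟨L₁, t₁, k₁, h₁⟩ := hf s hs
  obtain ⟨L₂, t₂, k₂, h₂⟩ := hg t₁ (hs.trans h₁.le)
  exact ⟨_, _, _, h₁.comp₂ h₂ (he (h₁.lt.trans_le h₂.le) h₂.lt)⟩

lemma eval {σ : Type*} (P : MvPolynomial σ ℕ) {idx : σ → ℕ} (hidx : ∀ i, idx i < A) :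
    Compilable A fun v => MvPolynomial.eval (fun i => v (idx i)) P := by
  induction P using MvPolynomial.induction_on with
  | C n => simpa only [MvPolynomial.eval_C] using const n
  | add P Q hP hQ => simpa only [map_add] using comp₂ defines_add hP hQ
  | mul_X P i hP =>
    simpa only [map_mul, MvPolynomial.eval_X] using comp₂ defines_mul hP (var (hidx i))

end Compilable

lemma MvPolynomial.exists_eval_eq_sub {σ : Type*} (W : MvPolynomial σ ℤ) :
    ∃ P Q : MvPolynomial σ ℕ, ∀ y : σ → ℕ,
      MvPolynomial.eval (fun i => (y i : ℤ)) W =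
        MvPolynomial.eval y P - MvPolynomial.eval y Q := by
  induction W using MvPolynomial.induction_on with
  | C c => exact ⟨C c.toNat, C (-c).toNat, fun y => by simp⟩
  | add W V hW hV =>
    obtain ⟨P, Q, hPQ⟩ := hW
    obtain ⟨P', Q', hPQ'⟩ := hV
    exact ⟨P + P', Q + Q', fun y => by simp only [map_add, hPQ, hPQ']; push_cast; ring⟩
  | mul_X W i hW =>
    obtain ⟨P, Q, hPQ⟩ := hW
    exact ⟨P * X i, Q * X i, fun y => by simp only [map_mul, eval_X, hPQ]; push_cast; ring⟩

lemma mem_solSet_iff {n : ℕ} {S : Set DEqn} (hS : ∀ q ∈ S, q.inE n) (v : ℕ → ℕ) :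
    (fun i : Fin n => v i) ∈ SolSet n S ↔ ∀ q ∈ S, q.holds v :=
  forall₂_congr fun q hq => holds_congr (hS q hq) fun i hi => by simp [extVal, hi]

def restrictSol {n : ℕ} (m : ℕ) (X : Fin n → ℕ) : Fin m → ℕ := fun i => extVal n X i

lemma Determines.bijOn_solSet {L E : List DEqn} {m n a : ℕ} {Z : Set (Fin m → ℕ)}
    (hL : Determines L (m + 1) n) (hE : ∀ q ∈ E, q.inE n)
    (hEZ : ∀ v, (∀ q ∈ L, q.holds v) →
      ((∀ q ∈ E, q.holds v) ↔ v m = a ∧ (fun i : Fin m => v i) ∈ Z)) :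
    Set.BijOn (restrictSol m) (SolSet n {q | q ∈ E ++ L}) Z := by
  have hS : ∀ q ∈ E ++ L, q.inE n := by
    simpa only [List.mem_append, or_imp, forall_and] using ⟨hE, hL.inE⟩
  have split : ∀ v : ℕ → ℕ, (∀ q ∈ E ++ L, q.holds v) ↔
      (∀ q ∈ E, q.holds v) ∧ ∀ q ∈ L, q.holds v := by
    simp only [List.mem_append, or_imp, forall_and, implies_true]
  refine ⟨fun X hX => ?_, fun X hX Y hY hXY => ?_, fun x hx => ?_⟩
  · obtain ⟨hXE, hXL⟩ := (split _).1 hX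
    exact ((hEZ _ hXL).1 hXE).2
  · obtain ⟨hXE, hXL⟩ := (split _).1 hX
    obtain ⟨hYE, hYL⟩ := (split _).1 hY
    have hagree : ∀ i < m + 1, extVal n X i = extVal n Y i := by
      intro i hi
      rcases Nat.lt_succ_iff_lt_or_eq.1 hi with hi | rfl
      · exact congrFun hXY ⟨i, hi⟩
      · exact ((hEZ _ hXL).1 hXE).1.trans ((hEZ _ hYL).1 hYE).1.symm
    funext i
    simpa [extVal] using hL.eq_of_eq _ _ hXL hYL hagree i i.isLt
  · obtain ⟨w, hwx, hw⟩ := hL.exists_solution fun i => if h : i < m then x ⟨i, h⟩ else a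
    have hmn : m < n := Nat.lt_of_succ_le hL.le
    have hrestrict : (fun i : Fin m => w i) = x := funext fun i => by simp [hwx i (by omega)]
    have hwE := (hEZ w hw).2 ⟨by simpa using hwx m m.lt_succ_self, hrestrict ▸ hx⟩
    refine ⟨fun i : Fin n => w i, (mem_solSet_iff hS w).2 ((split w).2 ⟨hwE, hw⟩), ?_⟩
    rw [← hrestrict]
    funext i
    simp [restrictSol, extVal, i.isLt.trans hmn]

lemma SolSet.bounded_of_bijOn {m n b : ℕ} {S : Set DEqn} {Z : Set (Fin m → ℕ)}
    (hS : (∃! X, X ∈ SolSet n S) → ∀ X ∈ SolSet n S, ∀ i, X i ≤ b)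
    (hSZ : Set.BijOn (restrictSol m) (SolSet n S) Z) (hZ : ∃! x, x ∈ Z) :
    ∀ x ∈ Z, ∀ i, x i ≤ b := by
  obtain ⟨x₀, hx₀, hx₀u⟩ := hZ
  obtain ⟨X₀, hX₀, rfl⟩ := hSZ.surjOn hx₀
  have hS' := hS ⟨X₀, hX₀, fun Y hY => hSZ.injOn hY hX₀ (hx₀u _ (hSZ.mapsTo hY))⟩
  intro x hx i
  obtain ⟨X, hX, rfl⟩ := hSZ.surjOn hx
  simp only [restrictSol, extVal]
  split_ifs with h
  · exact hS' X hX _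
  · exact Nat.zero_le b

def zeroSet {m : ℕ} (W : MvPolynomial (Fin (m + 1)) ℤ) (a : ℕ) : Set (Fin m → ℕ) :=
  {x | MvPolynomial.eval (Fin.cons (a : ℤ) fun i => (x i : ℤ)) W = 0}

lemma mem_zeroSet_iff {m : ℕ} {W : MvPolynomial (Fin (m + 1)) ℤ}
    {P Q : MvPolynomial (Fin (m + 1)) ℕ} (hPQ : ∀ y : Fin (m + 1) → ℕ,
      MvPolynomial.eval (fun i => (y i : ℤ)) W = MvPolynomial.eval y P - MvPolynomial.eval y Q)
    {a : ℕ} {x : Fin m → ℕ} :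
    x ∈ zeroSet W a ↔
      MvPolynomial.eval (Fin.cons a x) P = MvPolynomial.eval (Fin.cons a x) Q := by
  have h := hPQ (Fin.cons a x)
  rw [show (fun i => ((Fin.cons a x : Fin (m + 1) → ℕ) i : ℤ)) =
    Fin.cons (a : ℤ) fun i => (x i : ℤ) from Fin.comp_cons _ _ _] at h
  rw [zeroSet, Set.mem_ofPred_eq, h, sub_eq_zero, Nat.cast_inj]

/-- Variables of the system for `a`: `x` below `m`, the parameter at `m`, then blocks evaluating
`P` and `Q` (where `W = P - Q`), a block computing the constant `a`, and a zero. -/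
theorem exists_solSet_bijOn_zeroSet {m : ℕ} (W : MvPolynomial (Fin (m + 1)) ℤ) :
    ∃ N : ℕ → ℕ, Computable N ∧ ∃ S : ℕ → Set DEqn, ∀ a,
      (∀ q ∈ S a, q.inE (N a)) ∧
        Set.BijOn (restrictSol m) (SolSet (N a) (S a)) (zeroSet W a) := by
  obtain ⟨P, Q, hPQ⟩ := W.exists_eval_eq_sub
  let idx : Fin (m + 1) → ℕ := Fin.cons m fun j => j
  have hidx : ∀ i, idx i < m + 1 := Fin.cases (by simp [idx]) fun j => by simp [idx]
  obtain ⟨LP, tP, kP, hP⟩ := Compilable.eval P hidx (m + 1) le_rfl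
  obtain ⟨LQ, tQ, kQ, hQ⟩ := Compilable.eval Q hidx tP hP.le
  choose LC kC hC using fun a => Computes.const a tQ
  let z a := tQ + 2 * a + 1
  have hZ a := Computes.single (defines_zero (z a))
  let E a := [add kP (z a) kQ, add m (z a) (kC a)]
  have hE a : ∀ q ∈ E a, q.inE (z a + 1) := by
    have := hP.lt; have := hQ.lt; have := hP.le; have := hQ.le; have := (hC a).lt
    simp only [E, z, List.mem_cons, List.not_mem_nil, or_false, forall_eq_or_imp, forall_eq,
      inE_add]
    omega
  have hL a := ((hP.append hQ.toDetermines).append (hC a).toDetermines).append (hZ a).toDetermines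
  have hargs (v : ℕ → ℕ) : (fun i => v (idx i)) = Fin.cons (v m) fun j : Fin m => v j :=
    funext <| Fin.cases rfl fun _ => rfl
  refine ⟨fun a => z a + 1, ?_, fun a => {q | q ∈ E a ++ _}, fun a => ⟨?_,
    (hL a).bijOn_solSet (a := a) (hE a) fun v hv => ?_⟩⟩
  · exact (Primrec.succ.comp (Primrec.nat_add.comp (Primrec.const (tQ + 1))
      (Primrec.nat_mul.comp (Primrec.const 2) Primrec.id))).to_comp.of_eq fun a => by
        simp [z]; ring
  · intro q hq
    rcases List.mem_append.1 hq with hq | hq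
    exacts [hE a q hq, (hL a).inE q hq]
  · simp only [List.mem_append, List.mem_singleton, or_imp, forall_and, forall_eq] at hv
    obtain ⟨⟨⟨hvP, hvQ⟩, hvC⟩, hvZ⟩ := hv
    simp only [E, List.mem_cons, List.not_mem_nil, or_false, forall_eq_or_imp, forall_eq,
      holds_add]
    rw [hP.sound v hvP, hQ.sound v hvQ, (hC a).sound v hvC, (hZ a).sound v (by simpa using hvZ),
      mem_zeroSet_iff hPQ, hargs, add_zero, add_zero]
    constructor
    · rintro ⟨hPQ, rfl⟩; exact ⟨rfl, hPQ⟩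
    · rintro ⟨rfl, hPQ⟩; exact ⟨hPQ, rfl⟩

section Computability

variable {α : Type*} [Primcodable α]

theorem Primrec.mvPolynomial_eval {σ : Type*} (P : MvPolynomial σ ℕ) {c : α → σ → ℕ}
    (hc : ∀ i, Primrec fun z => c z i) : Primrec fun z => MvPolynomial.eval (c z) P := by
  induction P using MvPolynomial.induction_on with
  | C n => simpa only [MvPolynomial.eval_C] using Primrec.const n
  | add P Q hP hQ => simpa only [map_add] using Primrec.nat_add.comp hP hQ
  | mul_X P i hP =>
    simpa only [map_mul, MvPolynomial.eval_X] using Primrec.nat_mul.comp hP (hc i)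

theorem Primrec.finCons {m : ℕ} {β : Type*} [Primcodable β] :
    Primrec₂ fun (b : β) (x : Fin m → β) => (Fin.cons b x : Fin (m + 1) → β) := by
  have h (i : Fin (m + 1)) :
      Primrec fun p : β × (Fin m → β) => (Fin.cons p.1 p.2 : Fin (m + 1) → β) i := by
    induction i using Fin.cases with
    | zero => simpa using Primrec.fst
    | succ j => simpa using Primrec.fin_app.comp Primrec.snd (Primrec.const j)
  exact Primrec.fin_curry.2 ((Primrec.fin_curry₁.2 h).comp Primrec.snd Primrec.fst)

theorem PrimrecRel.exists_finArrow_lt {m : ℕ} {R : α → (Fin m → ℕ) → Prop}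
    (hR : PrimrecRel R) :
    PrimrecRel fun (a : α) (b : ℕ) => ∃ x : Fin m → ℕ, (∀ i, x i < b) ∧ R a x := by
  induction m generalizing α with
  | zero =>
    refine (hR.comp Primrec.fst (Primrec.const Fin.elim0)).of_eq fun q => ?_
    exact ⟨fun h => ⟨Fin.elim0, fun i => i.elim0, h⟩,
      fun ⟨x, _, h⟩ => Subsingleton.elim x Fin.elim0 ▸ h⟩
  | succ m ih =>
    have hR' : PrimrecRel fun (q : α × ℕ) (x : Fin m → ℕ) => R q.1 (Fin.cons q.2 x) :=
      hR.comp (Primrec.fst.comp Primrec.fst)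
        (Primrec.finCons.comp (Primrec.snd.comp Primrec.fst) Primrec.snd)
    have hcons : PrimrecRel fun (c : ℕ) (q : α × ℕ) =>
        ∃ x : Fin m → ℕ, (∀ i, x i < q.2) ∧ R q.1 (Fin.cons c x) :=
      (ih hR').comp (Primrec.pair (Primrec.fst.comp Primrec.snd) Primrec.fst)
        (Primrec.snd.comp Primrec.snd)
    refine (hcons.exists_mem_list.comp (Primrec.list_range.comp Primrec.snd)
      (Primrec.pair Primrec.fst Primrec.snd)).of_eq fun q => ?_
    simp only [List.mem_range]
    refine ⟨?_, ?_⟩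
    · rintro ⟨c, hc, x, hx, hR⟩
      exact ⟨Fin.cons c x, Fin.cases hc hx, hR⟩
    · rintro ⟨x, hx, hR⟩
      exact ⟨x 0, hx 0, Fin.tail x, fun i => hx i.succ, by rwa [Fin.cons_self_tail]⟩

theorem ComputablePred.rePred_exists {β : Type*} [Primcodable β] {R : α → β → Prop}
    (hR : ComputablePred fun q : α × β => R q.1 q.2) : REPred fun a => ∃ b, R a b := by
  obtain ⟨g, hg, hgR⟩ := ComputablePred.computable_iff.1 hR
  let f (a : α) (n : ℕ) : Bool :=
    ((Encodable.decode n : Option β).map fun b => g (a, b)).getD false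
  have hf : Computable₂ f := Computable.option_getD
    (Computable.option_map (Computable.decode.comp Computable.snd)
      (hg.comp (Computable.pair (Computable.fst.comp Computable.fst) Computable.snd)))
    (Computable.const false)
  have hgR' a b : R a b ↔ g (a, b) = true := iff_of_eq (congrFun hgR (a, b))
  refine (Partrec.rfind hf.partrec₂).dom_re.of_eq fun a => ?_
  simp only [Nat.rfind_dom, PFun.coe_val, Part.mem_some_iff, Part.some_dom, implies_true,
    and_true]
  constructor
  · rintro ⟨n, hn⟩
    cases h : (Encodable.decode n : Option β) with
    | none => simp [f, h] at hn
    | some b => exact ⟨b, (hgR' a b).2 (by simpa [f, h] using hn.symm)⟩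
  · rintro ⟨b, hb⟩
    exact ⟨Encodable.encode b, by simp [f, (hgR' a b).1 hb]⟩

theorem ComputablePred.comp {β : Type*} [Primcodable β] {p : β → Prop} {f : α → β} :
    ComputablePred p → Computable f → ComputablePred fun a => p (f a)
  | ⟨_, hp⟩, hf => ⟨fun _ => inferInstance, hp.comp hf⟩

theorem ComputablePred.or {p q : α → Prop} :
    ComputablePred p → ComputablePred q → ComputablePred fun a => p a ∨ q a
  | ⟨_, hp⟩, ⟨_, hq⟩ => ⟨fun _ => inferInstance,
    (Primrec.or.to_comp.comp hp hq).of_eq fun a => by simp only [Bool.decide_or]⟩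

theorem ComputablePred.of_existsUnique_of_bounded {m : ℕ} {p : α → Prop}
    {Z : α → (Fin m → ℕ) → Prop} (hp : REPred p) (hZ : PrimrecRel Z)
    (hpZ : ∀ a, p a ↔ ∃! x, Z a x) {b : α → ℕ} (hb : Computable b)
    (hbZ : ∀ a, p a → ∀ x, Z a x → ∀ i, x i < b a) : ComputablePred p := by
  have hnot a : ¬p a ↔ ∃ y : (Fin m → ℕ) × (Fin m → ℕ),
      (¬∃ x : Fin m → ℕ, (∀ i, x i < b a) ∧ Z a x) ∨ (y.1 ≠ y.2 ∧ Z a y.1 ∧ Z a y.2) := by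
    constructor
    · intro hpa
      by_cases hex : ∃ x : Fin m → ℕ, (∀ i, x i < b a) ∧ Z a x
      · obtain ⟨x, -, hx⟩ := hex
        have : ∃ y, Z a y ∧ y ≠ x := by
          by_contra! h
          exact hpa ((hpZ a).2 ⟨x, hx, h⟩)
        obtain ⟨y, hy, hyx⟩ := this
        exact ⟨(x, y), Or.inr ⟨hyx.symm, hx, hy⟩⟩
      · exact ⟨(0, 0), Or.inl hex⟩
    · rintro ⟨y, hex | ⟨hne, h₁, h₂⟩⟩ hpa <;> obtain ⟨x, hx, -⟩ := (hpZ a).1 hpa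
      · exact hex ⟨x, hbZ a hpa x hx, hx⟩
      · exact hne (((hpZ a).1 hpa).unique h₁ h₂)
  have hbounded : ComputablePred fun a => ∃ x : Fin m → ℕ, (∀ i, x i < b a) ∧ Z a x :=
    hZ.exists_finArrow_lt.computablePred.comp (Computable.pair Computable.id hb)
  have hpair : PrimrecPred fun q : α × (Fin m → ℕ) × (Fin m → ℕ) =>
      q.2.1 ≠ q.2.2 ∧ Z q.1 q.2.1 ∧ Z q.1 q.2.2 :=
    (Primrec.eq.comp (Primrec.fst.comp Primrec.snd) (Primrec.snd.comp Primrec.snd)).not.and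
      ((hZ.comp Primrec.fst (Primrec.fst.comp Primrec.snd)).and
        (hZ.comp Primrec.fst (Primrec.snd.comp Primrec.snd)))
  have hre : REPred fun a => ¬p a :=
    (ComputablePred.rePred_exists ((hbounded.comp Computable.fst).not.or
      hpair.computablePred)).of_eq fun a => (hnot a).symm
  exact ComputablePred.computable_iff_re_compl_re'.2 ⟨hp, hre⟩

end Computability

theorem primrecRel_mem_zeroSet {m : ℕ} (W : MvPolynomial (Fin (m + 1)) ℤ) :
    PrimrecRel fun a (x : Fin m → ℕ) => x ∈ zeroSet W a := by
  obtain ⟨P, Q, hPQ⟩ := W.exists_eval_eq_sub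
  have hcons (P : MvPolynomial (Fin (m + 1)) ℕ) :
      Primrec fun q : ℕ × (Fin m → ℕ) => MvPolynomial.eval (Fin.cons q.1 q.2) P :=
    Primrec.mvPolynomial_eval P fun i => Primrec.fin_app.comp Primrec.finCons (Primrec.const i)
  exact (Primrec.eq.comp (hcons P) (hcons Q)).of_eq fun q => (mem_zeroSet_iff hPQ).symm

/-- Theorem 4 for κ = 2: suppose every system S ⊆ E_n with a unique solution
in ℕⁿ has its solution bounded coordinatewise by a computable function of n, and assume
Matiyasevich's single-fold transfer theorem (a single-fold representation of one function of
exponential growth yields single-fold representations of all r.e. predicates). Then no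
function of exponential growth admits a single-fold Diophantine representation — unless every
recursively enumerable subset of ℕ is computable. -/
theorem stmt_8
    (hbound : ∃ B : ℕ → ℕ, Computable B ∧ ∀ n : ℕ, ∀ S : Set DEqn,
      (∀ e ∈ S, DEqn.inE n e) → (∃! x : Fin n → ℕ, x ∈ SolSet n S) →
      ∀ x ∈ SolSet n S, ∀ i, x i ≤ B n)
    (htransfer : (∃ γ : ℕ → ℕ, ExpGrowth γ ∧ SingleFoldRepFun γ) →
      ∀ p : ℕ → Prop, REPred p → SingleFoldRepPred p) :
    (∃ γ : ℕ → ℕ, ExpGrowth γ ∧ SingleFoldRepFun γ) →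
      ∀ p : ℕ → Prop, REPred p → ComputablePred p := by
  intro hγ p hp
  obtain ⟨m, W, hW⟩ := htransfer hγ p hp
  obtain ⟨B, hB, hbound⟩ := hbound
  obtain ⟨N, hN, S, hS⟩ := exists_solSet_bijOn_zeroSet W
  refine ComputablePred.of_existsUnique_of_bounded hp (primrecRel_mem_zeroSet W) hW
    (Computable.succ.comp (hB.comp hN)) fun a ha x hx i => Nat.lt_succ_of_le ?_
  exact SolSet.bounded_of_bijOn (hbound _ _ (hS a).1) (hS a).2 ((hW a).1 ha) x hx i
end

section
/- In the Skolem-style reduction, the auxiliary variables are uniquely determined: for each solution (x₁,...,x_p) ∈ ℕ^p of D = 0, there is a unique tuple (x_{p+1},...,xₙ) ∈ ℕ^{n-p} such that (x₁,...,xₙ) solves the system T; consequently D = 0 and T have the same number of solutions in ℕ. -/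
/-!
Write `D = a - b` with `a`, `b` terms built from `1`, the variables, `+` and `·`, and give every
compound subterm a fresh variable, defined by one equation from variables of smaller index. Such a
triangular system has exactly one solution over given values of `x₁, …, x_p`, obtained by
evaluating its equations in order. Adding `x_p = 1` and the single non-defining equation
`a · x_p = b` cuts this unique extension down to the `x` with `a(x) = b(x)`, i.e. `D(x) = 0`, so
restriction to the first `p` coordinates is a bijection between the two solution sets.
-/

theorem forall_castLE_eq_iff_extVal {p n : ℕ} (h : p ≤ n) (x : Fin p → ℕ) (y : Fin n → ℕ) :
    (∀ i : Fin p, y (Fin.castLE h i) = x i) ↔ ∀ k < p, extVal n y k = extVal p x k := by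
  refine ⟨fun hy k hk => ?_, fun hy i => ?_⟩
  · simpa [extVal, hk, show k < n by omega] using hy ⟨k, hk⟩
  · have := hy i i.isLt
    simp only [extVal, dif_pos i.isLt, dif_pos (show (i : ℕ) < n by omega)] at this
    exact this

namespace DEqn

def out : DEqn → ℕ
  | Sum.inl k => k
  | Sum.inr (Sum.inl (_, _, k)) => k
  | Sum.inr (Sum.inr (_, _, k)) => k

def rhs (v : ℕ → ℕ) : DEqn → ℕ
  | Sum.inl _ => 1
  | Sum.inr (Sum.inl (i, j, _)) => v i + v j
  | Sum.inr (Sum.inr (i, j, _)) => v i * v j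

def ArgsLt (m : ℕ) : DEqn → Prop
  | Sum.inl _ => True
  | Sum.inr (Sum.inl (i, j, _)) => i < m ∧ j < m
  | Sum.inr (Sum.inr (i, j, _)) => i < m ∧ j < m

theorem holds_iff {v : ℕ → ℕ} {e : DEqn} : e.holds v ↔ v e.out = e.rhs v := by
  rcases e with k | ⟨i, j, k⟩ | ⟨i, j, k⟩
  exacts [Iff.rfl, eq_comm, eq_comm]

theorem rhs_congr {m : ℕ} {v w : ℕ → ℕ} {e : DEqn} (he : e.ArgsLt m)
    (hvw : ∀ k < m, v k = w k) : e.rhs v = e.rhs w := by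
  rcases e with k | ⟨i, j, k⟩ | ⟨i, j, k⟩
  · rfl
  all_goals simp only [rhs, hvw i he.1, hvw j he.2]

theorem inE_of_argsLt {m n : ℕ} {e : DEqn} (he : e.ArgsLt m) (hout : e.out = m) (hmn : m < n) :
    e.inE n := by
  rcases e with k | ⟨i, j, k⟩ | ⟨i, j, k⟩ <;>
    simp only [ArgsLt, out, inE] at he hout ⊢ <;> omega

/-- The `j`-th equation of `L` defines the variable `m + j` from variables of smaller index. -/
def Triangular : ℕ → List DEqn → Prop
  | _, [] => True
  | m, e :: L => e.out = m ∧ e.ArgsLt m ∧ Triangular (m + 1) L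

def solve : ℕ → List DEqn → (ℕ → ℕ) → ℕ → ℕ
  | _, [], v => v
  | m, e :: L, v => solve (m + 1) L (Function.update v m (e.rhs v))

theorem triangular_append {m : ℕ} {L₁ L₂ : List DEqn} :
    Triangular m (L₁ ++ L₂) ↔ Triangular m L₁ ∧ Triangular (m + L₁.length) L₂ := by
  induction L₁ generalizing m with
  | nil => simp [Triangular]
  | cons e L₁ ih =>
    simp only [List.cons_append, Triangular, ih, List.length_cons, and_assoc,
      show m + (L₁.length + 1) = m + 1 + L₁.length by omega]

theorem solve_append (m : ℕ) (L₁ L₂ : List DEqn) (v : ℕ → ℕ) :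
    solve m (L₁ ++ L₂) v = solve (m + L₁.length) L₂ (solve m L₁ v) := by
  induction L₁ generalizing m v with
  | nil => rfl
  | cons e L₁ ih =>
    simp only [List.cons_append, solve, ih, List.length_cons,
      show m + (L₁.length + 1) = m + 1 + L₁.length by omega]

theorem solve_apply_of_not_mem {m k : ℕ} (L : List DEqn) (v : ℕ → ℕ)
    (hk : k < m ∨ m + L.length ≤ k) : solve m L v k = v k := by
  induction L generalizing m v with
  | nil => rfl
  | cons e L ih =>
    simp only [List.length_cons] at hk
    rw [solve, ih _ (by omega), Function.update_of_ne (by omega)]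

theorem forall_holds_iff_eq_solve {m : ℕ} {L : List DEqn} (hL : Triangular m L) {v w : ℕ → ℕ}
    (hwv : ∀ k < m, w k = v k) :
    (∀ e ∈ L, e.holds w) ↔ ∀ k < m + L.length, w k = solve m L v k := by
  induction L generalizing m v with
  | nil => simpa [solve] using hwv
  | cons e L ih =>
    obtain ⟨hout, hargs, hL⟩ := hL
    have hrhs : e.rhs w = e.rhs v := rhs_congr hargs hwv
    have hw' : (∀ k < m + 1, w k = Function.update v m (e.rhs v) k) ↔ e.holds w := by
      rw [holds_iff, hout, hrhs]
      refine ⟨fun h => by simpa using h m (by omega), fun h k hk => ?_⟩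
      rcases Nat.lt_succ_iff_lt_or_eq.mp hk with hk | rfl
      · rw [Function.update_of_ne hk.ne, hwv k hk]
      · simpa using h
    simp only [List.mem_cons, forall_eq_or_imp, List.length_cons, solve,
      show m + (L.length + 1) = m + 1 + L.length by omega]
    constructor
    · rintro ⟨he, hrest⟩
      exact (ih hL (hw'.mpr he)).mp hrest
    · intro h
      have hlow : ∀ k < m + 1, w k = Function.update v m (e.rhs v) k := fun k hk => by
        rw [h k (by omega), solve_apply_of_not_mem _ _ (Or.inl hk)]
      exact ⟨hw'.mp hlow, (ih hL hlow).mpr fun k hk => h k (by omega)⟩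

theorem inE_of_triangular {m : ℕ} {L : List DEqn} (hL : Triangular m L) :
    ∀ e ∈ L, e.inE (m + L.length) := by
  induction L generalizing m with
  | nil => simp
  | cons e L ih =>
    obtain ⟨hout, hargs, hL⟩ := hL
    simp only [List.mem_cons, forall_eq_or_imp, List.length_cons,
      show m + (L.length + 1) = m + 1 + L.length by omega]
    exact ⟨inE_of_argsLt hargs hout (by omega), ih hL⟩

theorem extVal_solve {p : ℕ} {L : List DEqn} (x : Fin p → ℕ) :
    extVal (p + L.length) (fun k => solve p L (extVal p x) k) = solve p L (extVal p x) := by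
  funext k
  by_cases hk : k < p + L.length
  · simp only [extVal, dif_pos hk]
  · rw [extVal, dif_neg hk, solve_apply_of_not_mem _ _ (Or.inr (by omega)), extVal,
      dif_neg (by omega)]

theorem castLE_eq_and_mem_solSet_iff {p : ℕ} {L : List DEqn} (hL : Triangular p L)
    (C : Set DEqn) (x : Fin p → ℕ) (y : Fin (p + L.length) → ℕ) :
    ((∀ i : Fin p, y (Fin.castLE (Nat.le_add_right p L.length) i) = x i) ∧
        y ∈ SolSet (p + L.length) ({e | e ∈ L} ∪ C)) ↔
      (∀ c ∈ C, c.holds (solve p L (extVal p x))) ∧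
        y = fun k : Fin (p + L.length) => solve p L (extVal p x) k := by
  simp only [forall_castLE_eq_iff_extVal, SolSet, Set.mem_ofPred_eq, Set.mem_union, or_imp,
    forall_and]
  constructor
  · rintro ⟨hlow, hL', hC⟩
    have hy : y = fun k : Fin (p + L.length) => solve p L (extVal p x) k := by
      funext i
      simpa [extVal] using (forall_holds_iff_eq_solve hL hlow).mp hL' i i.isLt
    rw [hy, extVal_solve] at hC
    exact ⟨hC, hy⟩
  · rintro ⟨hC, rfl⟩
    rw [extVal_solve]
    have hlow : ∀ k < p, solve p L (extVal p x) k = extVal p x k :=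
      fun k hk => solve_apply_of_not_mem _ _ (Or.inl hk)
    exact ⟨hlow, (forall_holds_iff_eq_solve hL hlow).mpr fun _ _ => rfl, hC⟩

end DEqn

inductive NatTerm (p : ℕ) : Type
  | one : NatTerm p
  | var : Fin p → NatTerm p
  | add : NatTerm p → NatTerm p → NatTerm p
  | mul : NatTerm p → NatTerm p → NatTerm p

namespace NatTerm

variable {p : ℕ}

def eval (x : Fin p → ℕ) : NatTerm p → ℕ
  | one => 1
  | var i => x i
  | add a b => a.eval x + b.eval x
  | mul a b => a.eval x * b.eval x

/-- A triangular system with fresh variables from `m` on, one per compound subterm, and the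
index of the variable that carries the value of the term. -/
def compile : NatTerm p → ℕ → List DEqn × ℕ
  | one, m => ([Sum.inl m], m)
  | var i, _ => ([], i)
  | add a b, m =>
    let A := a.compile m
    let B := b.compile (m + A.1.length)
    let k := m + A.1.length + B.1.length
    (A.1 ++ B.1 ++ [Sum.inr (Sum.inl (A.2, B.2, k))], k)
  | mul a b, m =>
    let A := a.compile m
    let B := b.compile (m + A.1.length)
    let k := m + A.1.length + B.1.length
    (A.1 ++ B.1 ++ [Sum.inr (Sum.inr (A.2, B.2, k))], k)

theorem triangular_compile_and_out_lt (e : NatTerm p) {m : ℕ} (hm : p ≤ m) :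
    DEqn.Triangular m (e.compile m).1 ∧ (e.compile m).2 < m + (e.compile m).1.length := by
  induction e generalizing m with
  | one => simp [compile, DEqn.Triangular, DEqn.out, DEqn.ArgsLt]
  | var i => simpa [compile, DEqn.Triangular] using i.isLt.trans_le hm
  | add a b iha ihb | mul a b iha ihb =>
    obtain ⟨hA, hoa⟩ := iha hm
    obtain ⟨hB, hob⟩ := ihb (m := m + (a.compile m).1.length) (by omega)
    simp only [compile, DEqn.triangular_append, List.length_append, DEqn.Triangular,
      DEqn.out, DEqn.ArgsLt, List.length_singleton]
    exact ⟨⟨⟨hA, hB⟩, by omega, ⟨by omega, by omega⟩, trivial⟩, by omega⟩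

theorem solve_compile (e : NatTerm p) {m : ℕ} (hm : p ≤ m) (x : Fin p → ℕ) {v : ℕ → ℕ}
    (hv : ∀ i : Fin p, v i = x i) : DEqn.solve m (e.compile m).1 v (e.compile m).2 = e.eval x := by
  induction e generalizing m v with
  | one => simp [compile, DEqn.solve, DEqn.rhs, eval]
  | var i => exact hv i
  | add a b iha ihb | mul a b iha ihb =>
    have hoa := (a.triangular_compile_and_out_lt hm).2
    have hv' : ∀ i : Fin p, DEqn.solve m (a.compile m).1 v i = x i := fun i => by
      rw [DEqn.solve_apply_of_not_mem _ _ (Or.inl (by omega)), hv]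
    simp only [compile, DEqn.solve_append, List.length_append, DEqn.solve, Function.update_self,
      DEqn.rhs, eval, ← Nat.add_assoc]
    rw [DEqn.solve_apply_of_not_mem _ _ (Or.inl (by omega)), iha hm hv, ihb (by omega) hv']

/-- There is no term for `0`, so `numeral n` stands for `n + 1`. -/
def numeral : ℕ → NatTerm p
  | 0 => one
  | n + 1 => add (numeral n) one

theorem eval_numeral (x : Fin p → ℕ) (n : ℕ) : (numeral n : NatTerm p).eval x = n + 1 := by
  induction n with
  | zero => rfl
  | succ n ih => simp [numeral, eval, ih]

theorem exists_eval_eq_sub (D : MvPolynomial (Fin p) ℤ) :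
    ∃ a b : NatTerm p, ∀ x : Fin p → ℕ,
      MvPolynomial.eval (fun i => (x i : ℤ)) D = a.eval x - b.eval x := by
  induction D using MvPolynomial.induction_on with
  | C z =>
    refine ⟨numeral z.toNat, numeral (-z).toNat, fun x => ?_⟩
    rw [MvPolynomial.eval_C, eval_numeral, eval_numeral]
    omega
  | add q r hq hr =>
    obtain ⟨a, b, hab⟩ := hq
    obtain ⟨c, d, hcd⟩ := hr
    refine ⟨add a c, add b d, fun x => ?_⟩
    rw [map_add, hab, hcd]
    push_cast [eval]
    ring
  | mul_X q i hq =>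
    obtain ⟨a, b, hab⟩ := hq
    refine ⟨mul a (var i), mul b (var i), fun x => ?_⟩
    rw [map_mul, hab, MvPolynomial.eval_X]
    push_cast [eval]
    ring

/-- A triangular system defining `x_p = 1` and the values of `a` and `b`, and the extra equation
`a · x_p = b`, which expresses `a = b` with the allowed equation shapes. -/
def eqSystem (a b : NatTerm p) : List DEqn × DEqn :=
  let A := a.compile (p + 1)
  let B := b.compile (p + 1 + A.1.length)
  (Sum.inl p :: (A.1 ++ B.1), Sum.inr (Sum.inr (A.2, p, B.2)))

theorem triangular_eqSystem (a b : NatTerm p) : DEqn.Triangular p (eqSystem a b).1 :=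
  ⟨rfl, trivial, DEqn.triangular_append.mpr
    ⟨(a.triangular_compile_and_out_lt (by omega)).1, (b.triangular_compile_and_out_lt (by omega)).1⟩⟩

theorem inE_eqSystem (a b : NatTerm p) :
    (eqSystem a b).2.inE (p + (eqSystem a b).1.length) := by
  have hA := (a.triangular_compile_and_out_lt (m := p + 1) (by omega)).2
  have hB := (b.triangular_compile_and_out_lt (m := p + 1 + (a.compile (p + 1)).1.length) (by omega)).2
  simp only [eqSystem, DEqn.inE, List.length_cons, List.length_append]
  omega

theorem holds_eqSystem_iff (a b : NatTerm p) (x : Fin p → ℕ) :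
    (eqSystem a b).2.holds (DEqn.solve p (eqSystem a b).1 (extVal p x)) ↔ a.eval x = b.eval x := by
  simp only [eqSystem, DEqn.solve, DEqn.solve_append, DEqn.holds, DEqn.rhs]
  set v := Function.update (extVal p x) p 1
  set mA := p + 1 + (a.compile (p + 1)).1.length
  have hv : ∀ i : Fin p, v i = x i := fun i => by
    simp [v, extVal, Function.update_of_ne i.isLt.ne]
  have hA := (a.triangular_compile_and_out_lt (m := p + 1) (by omega)).2
  have hv' : ∀ i : Fin p, DEqn.solve (p + 1) (a.compile (p + 1)).1 v i = x i := fun i => by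
    rw [DEqn.solve_apply_of_not_mem _ _ (Or.inl (by omega)), hv]
  have hWa : DEqn.solve mA (b.compile mA).1 (DEqn.solve (p + 1) (a.compile (p + 1)).1 v)
      (a.compile (p + 1)).2 = a.eval x := by
    rw [DEqn.solve_apply_of_not_mem _ _ (Or.inl hA), a.solve_compile (by omega) x hv]
  have hWp :
      DEqn.solve mA (b.compile mA).1 (DEqn.solve (p + 1) (a.compile (p + 1)).1 v) p = 1 := by
    rw [DEqn.solve_apply_of_not_mem _ _ (Or.inl (by omega)),
      DEqn.solve_apply_of_not_mem _ _ (Or.inl (by omega))]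
    exact Function.update_self ..
  rw [hWa, hWp, b.solve_compile (by omega) x hv', mul_one]

end NatTerm

universe u

theorem Cardinal.mk_eq_of_forall_iff {α β : Type u} {A : Set α} {S : Set β} (r : β → α)
    (f : α → β) (h : ∀ x y, r y = x ∧ y ∈ S ↔ x ∈ A ∧ y = f x) :
    Cardinal.mk A = Cardinal.mk S := by
  refine Cardinal.mk_congr (Set.BijOn.equiv f ⟨fun x hx => ((h x _).2 ⟨hx, rfl⟩).2, ?_, ?_⟩)
  · intro x₁ hx₁ x₂ hx₂ hf
    rw [← ((h x₁ _).2 ⟨hx₁, rfl⟩).1, ← ((h x₂ _).2 ⟨hx₂, rfl⟩).1, hf]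
  · intro y hy
    obtain ⟨hx, hfy⟩ := (h _ y).1 ⟨rfl, hy⟩
    exact ⟨_, hx, hfy.symm⟩

theorem stmt_10_general (p : ℕ) (D : MvPolynomial (Fin p) ℤ) :
    ∃ n : ℕ, ∃ hpn : p < n, ∃ T : Set DEqn, (∀ e ∈ T, DEqn.inE n e) ∧
      (∀ x : Fin p → ℕ,
        (MvPolynomial.eval (fun i => (x i : ℤ)) D = 0 ↔
          ∃ y : Fin n → ℕ, (∀ i : Fin p, y (Fin.castLE hpn.le i) = x i) ∧ y ∈ SolSet n T)) ∧
      (∀ x : Fin p → ℕ, MvPolynomial.eval (fun i => (x i : ℤ)) D = 0 →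
        ∃! y : Fin n → ℕ, (∀ i : Fin p, y (Fin.castLE hpn.le i) = x i) ∧ y ∈ SolSet n T) ∧
      Cardinal.mk {x : Fin p → ℕ | MvPolynomial.eval (fun i => (x i : ℤ)) D = 0} =
        Cardinal.mk (SolSet n T) := by
  obtain ⟨a, b, hD⟩ := NatTerm.exists_eval_eq_sub D
  set L := (NatTerm.eqSystem a b).1
  set c := (NatTerm.eqSystem a b).2
  have hL : DEqn.Triangular p L := NatTerm.triangular_eqSystem a b
  have hc : ∀ x, c.holds (DEqn.solve p L (extVal p x)) ↔ a.eval x = b.eval x :=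
    NatTerm.holds_eqSystem_iff a b
  have hpn : p < p + L.length := by simp [L, NatTerm.eqSystem]
  have key : ∀ x y, ((∀ i, y (Fin.castLE hpn.le i) = x i) ∧
      y ∈ SolSet (p + L.length) ({e | e ∈ L} ∪ {c})) ↔
        MvPolynomial.eval (fun i => (x i : ℤ)) D = 0 ∧
          y = fun k : Fin (p + L.length) => DEqn.solve p L (extVal p x) k := fun x y => by
    simp only [DEqn.castLE_eq_and_mem_solSet_iff hL, Set.mem_singleton_iff, forall_eq, hc, hD,
      sub_eq_zero, Nat.cast_inj]
  refine ⟨p + L.length, hpn, {e | e ∈ L} ∪ {c}, ?_,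
    fun x => ⟨fun h => ⟨_, (key x _).2 ⟨h, rfl⟩⟩, fun ⟨y, hy⟩ => ((key x y).1 hy).1⟩,
    fun x h => ⟨_, (key x _).2 ⟨h, rfl⟩, fun y hy => ((key x y).1 hy).2⟩,
    Cardinal.mk_eq_of_forall_iff (fun y i => y (Fin.castLE hpn.le i))
      (fun x k => DEqn.solve p L (extVal p x) k) fun x y => ?_⟩
  · rintro e (he | rfl)
    exacts [DEqn.inE_of_triangular hL e he, NatTerm.inE_eqSystem a b]
  · rw [funext_iff]
    exact key x y

/-- Skolem-style reduction, Conditions 1 and 2 over ℕ: moreover the auxiliary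
variables are uniquely determined: each solution (x₁,...,x_p) ∈ ℕ^p of D = 0 extends to a
unique solution (x₁,...,x_n) ∈ ℕⁿ of T; consequently D = 0 and T have the same number of
solutions in ℕ. -/
theorem stmt_10 (p : ℕ) (D : MvPolynomial (Fin p) ℤ)
    (hdeg : ∀ i : Fin p, 1 ≤ MvPolynomial.degreeOf i D) :
    ∃ n : ℕ, ∃ hpn : p < n, ∃ T : Set DEqn, (∀ e ∈ T, DEqn.inE n e) ∧
      (∀ x : Fin p → ℕ,
        (MvPolynomial.eval (fun i => (x i : ℤ)) D = 0 ↔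
          ∃ y : Fin n → ℕ, (∀ i : Fin p, y (Fin.castLE hpn.le i) = x i) ∧ y ∈ SolSet n T)) ∧
      (∀ x : Fin p → ℕ, MvPolynomial.eval (fun i => (x i : ℤ)) D = 0 →
        ∃! y : Fin n → ℕ, (∀ i : Fin p, y (Fin.castLE hpn.le i) = x i) ∧ y ∈ SolSet n T) ∧
      Cardinal.mk {x : Fin p → ℕ | MvPolynomial.eval (fun i => (x i : ℤ)) D = 0} =
        Cardinal.mk (SolSet n T) :=
  stmt_10_general p D
end

section
/- Conversely, if f_κ is majorized by a computable function h, then solvability in ℕ of any Diophantine equation with fewer than κ solutions is decidable: reduce D to an equivalent system S ⊆ E_n and check all candidate solutions with coordinates ≤ h(n); i.e., statement (b) implies statement (a) of Theorem 2. -/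
/-! Whether a system has a solution in `[0, b)ⁿ` is decidable by a bounded search: such tuples
are coded by the numbers `m < bⁿ` through their base-`b` digits, and checking the finitely many
equations at the digits of `m` is primitive recursive. When `h` majorizes `f_κ`, a solvable system
with fewer than `κ` solutions has a solution in `[0, h n]ⁿ`, so the search with `b = h n + 1` is
complete. -/

def DEqn.sides (v : ℕ → ℕ) : DEqn → ℕ × ℕ
  | Sum.inl k => (v k, 1)
  | Sum.inr (Sum.inl (i, j, k)) => (v i + v j, v k)
  | Sum.inr (Sum.inr (i, j, k)) => (v i * v j, v k)

theorem DEqn.holds_iff_sides (v : ℕ → ℕ) (e : DEqn) :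
    e.holds v ↔ (e.sides v).1 = (e.sides v).2 := by
  rcases e with _ | _ | _ <;> rfl

instance DEqn.decidableHolds (v : ℕ → ℕ) : DecidablePred (DEqn.holds v) :=
  fun e => decidable_of_iff' _ (e.holds_iff_sides v)

def digitVal (b m i : ℕ) : ℕ := m / b ^ i % b

theorem extVal_finFunctionFinEquiv_symm {b n : ℕ} (m : Fin (b ^ n)) :
    extVal n (fun i => (finFunctionFinEquiv.symm m i : ℕ)) = digitVal b m := by
  funext i
  by_cases hi : i < n
  · simp only [extVal, hi, dite_true]
    rfl
  · obtain ⟨k, rfl⟩ := Nat.exists_eq_add_of_le (not_lt.mp hi)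
    rw [extVal, dif_neg hi, digitVal, pow_add, ← Nat.div_div_eq_div_mul, Nat.div_eq_of_lt m.isLt,
      Nat.zero_div, Nat.zero_mod]

def HasDigitSolution (b n : ℕ) (S : List DEqn) : Prop :=
  ∃ m < b ^ n, ∀ e ∈ S, e.holds (digitVal b m)

instance (b n : ℕ) (S : List DEqn) : Decidable (HasDigitSolution b n S) :=
  inferInstanceAs (Decidable (∃ m < b ^ n, _))

theorem hasDigitSolution_iff {b n : ℕ} {S : List DEqn} :
    HasDigitSolution b n S ↔ ∃ x ∈ SolSet n {e | e ∈ S}, ∀ i, x i < b := by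
  constructor
  · rintro ⟨m, hm, hS⟩
    refine ⟨fun i => finFunctionFinEquiv.symm ⟨m, hm⟩ i, fun e he => ?_, fun i => Fin.isLt _⟩
    rw [extVal_finFunctionFinEquiv_symm]
    exact hS e he
  · rintro ⟨x, hx, hxb⟩
    set m := finFunctionFinEquiv fun i => (⟨x i, hxb i⟩ : Fin b)
    have hm := extVal_finFunctionFinEquiv_symm m
    rw [Equiv.symm_apply_apply] at hm
    exact ⟨m, m.isLt, fun e he => hm ▸ hx e he⟩

section Primrec

open Primrec

theorem Primrec.nat_pow : Primrec₂ ((· ^ ·) : ℕ → ℕ → ℕ) :=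
  Primrec₂.unpaired'.1 Nat.Primrec.pow

variable {α : Type*} [Primcodable α] {v : α → ℕ → ℕ}

theorem DEqn.primrec₂_sides (hv : Primrec₂ v) : Primrec₂ fun a (e : DEqn) => e.sides (v a) := by
  have hv' {g : ℕ × ℕ × ℕ → ℕ} (hg : Primrec g) :
      Primrec fun q : ((α × DEqn) × ((ℕ × ℕ × ℕ) ⊕ (ℕ × ℕ × ℕ))) × (ℕ × ℕ × ℕ) =>
        v q.1.1.1 (g q.2) :=
    hv.comp (fst.comp (fst.comp fst)) (hg.comp snd)
  have cases : Primrec fun p : α × DEqn =>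
      Sum.casesOn (motive := fun _ => ℕ × ℕ) p.2 (fun k => (v p.1 k, 1)) fun t =>
        Sum.casesOn (motive := fun _ => ℕ × ℕ) t
          (fun r => (v p.1 r.1 + v p.1 r.2.1, v p.1 r.2.2))
          (fun r => (v p.1 r.1 * v p.1 r.2.1, v p.1 r.2.2)) := by
    refine sumCasesOn snd (pair (hv.comp (fst.comp fst) snd) (const 1)) (sumCasesOn snd ?_ ?_)
    · exact pair (nat_add.comp (hv' fst) (hv' (fst.comp snd))) (hv' (snd.comp snd))
    · exact pair (nat_mul.comp (hv' fst) (hv' (fst.comp snd))) (hv' (snd.comp snd))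
  refine cases.of_eq ?_
  rintro ⟨a, k | ⟨i, j, k⟩ | ⟨i, j, k⟩⟩ <;> rfl

theorem DEqn.primrecRel_holds (hv : Primrec₂ v) : PrimrecRel fun a (e : DEqn) => e.holds (v a) :=
  (Primrec.eq.comp (fst.comp (DEqn.primrec₂_sides hv)) (snd.comp (DEqn.primrec₂_sides hv))).of_eq
    fun p => (p.2.holds_iff_sides (v p.1)).symm

theorem primrec₂_digitVal : Primrec₂ fun (p : ℕ × ℕ) (i : ℕ) => digitVal p.1 p.2 i :=
  nat_mod.comp (nat_div.comp (snd.comp fst) (nat_pow.comp (fst.comp fst) snd)) (fst.comp fst)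

theorem primrecPred_hasDigitSolution :
    PrimrecPred fun q : ℕ × ℕ × List DEqn => HasDigitSolution q.1 q.2.1 q.2.2 := by
  have hall : PrimrecRel fun (S : List DEqn) (p : ℕ × ℕ) => ∀ e ∈ S, e.holds (digitVal p.1 p.2) :=
    PrimrecRel.forall_mem_list ((DEqn.primrecRel_holds primrec₂_digitVal).comp snd fst)
  have hsol : PrimrecRel fun (m : ℕ) (q : ℕ × ℕ × List DEqn) =>
      ∀ e ∈ q.2.2, e.holds (digitVal q.1 m) :=
    hall.comp (snd.comp (snd.comp snd)) (pair (fst.comp snd) fst)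
  have hbound : Primrec fun q : ℕ × ℕ × List DEqn => q.1 ^ q.2.1 :=
    nat_pow.comp fst (fst.comp snd)
  exact (hsol.exists_mem_list.comp (list_range.comp hbound) Primrec.id).of_eq
    fun q => by simp only [List.mem_range, id, HasDigitSolution]

end Primrec

theorem stmt_13_general (κ : Cardinal)
    (h : ℕ → ℕ) (hcomp : Computable h) (hmaj : ∀ n, IsBound κ n (h n)) :
    ∃ A : ℕ × List DEqn → Bool, Computable A ∧
      ∀ n : ℕ, ∀ S : List DEqn, (∀ e ∈ S, DEqn.inE n e) →
        Cardinal.mk (SolSet n {e | e ∈ S}) < κ →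
        (A (n, S) = true ↔ (SolSet n {e | e ∈ S}).Nonempty) := by
  refine ⟨fun p => decide (HasDigitSolution (h p.1 + 1) p.1 p.2), ?_, fun n S hE hcard => ?_⟩
  · exact primrecPred_hasDigitSolution.decide.to_comp.comp
      ((Computable.succ.comp (hcomp.comp .fst)).pair .id)
  · rw [decide_eq_true_iff, hasDigitSolution_iff]
    refine ⟨fun ⟨x, hx, _⟩ => ⟨x, hx⟩, fun hne => ?_⟩
    obtain ⟨x, hx, hxb⟩ := hmaj n _ hE hne hcard
    exact ⟨x, hx, fun i => Nat.lt_succ_of_le (hxb i)⟩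

/-- (b) ⇒ (a) of Theorem 2: if f_κ is majorized by a computable h (i.e.,
h(n) is an admissible bound for each n), then there is an algorithm deciding, for every
system S ⊆ E_n with fewer than κ solutions in ℕⁿ, whether S is solvable in ℕⁿ. -/
theorem stmt_13 (κ : Cardinal) (hκ : 2 ≤ κ)
    (h : ℕ → ℕ) (hcomp : Computable h) (hmaj : ∀ n, IsBound κ n (h n)) :
    ∃ A : ℕ × List DEqn → Bool, Computable A ∧
      ∀ n : ℕ, ∀ S : List DEqn, (∀ e ∈ S, DEqn.inE n e) →
        Cardinal.mk (SolSet n {e | e ∈ S}) < κ →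
        (A (n, S) = true ↔ (SolSet n {e | e ∈ S}).Nonempty) :=
  stmt_13_general κ h hcomp hmaj
end
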